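/- arXiv:1805.04151 — 7 statements merged into one kernel-verified Lean document; each statement's English description precedes it below -/
import Mathlib

section
/- Let $K_m$ be the complete graph on $m$ vertices and $G_1,\dots,G_t$ be bipartite graphs on the same vertex set whose edge sets cover $E(K_m)$. If $\tau(G_i)$ denotes the fraction of non-isolated vertices of $G_i$, then $\log_2 m \le \sum_{i=1}^t \tau(G_i)$. -/
/-!
Give every vertex `v` the weight `2 ^ (-d v)`, where `d v` is the number of graphs `G i` in which
`v` is not isolated. Choosing a side of each bipartition uniformly at random, `v` lies on the chosen
side of every graph that touches it with probability `2 ^ (-d v)`, and no two vertices can do so at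
once, since the graph covering the edge between them separates them. Hence
`∑ v, 2 ^ (-d v) ≤ 1`, and Jensen's inequality for `x ↦ 2 ^ x` turns this into
`log₂ m ≤ (∑ v, d v) / m = ∑ i, τ (G i)`.
-/

open Finset

theorem card_filter_forall_mem_eq_pow_card_compl {ι β : Type*} [Fintype ι] [DecidableEq ι]
    [Fintype β] [DecidableEq β] (S : Finset ι) (f : ι → β) :
    #{σ : ι → β | ∀ i ∈ S, σ i = f i} = Fintype.card β ^ #Sᶜ := by
  have hpi : ({σ : ι → β | ∀ i ∈ S, σ i = f i} : Finset (ι → β)) =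
      Fintype.piFinset fun i => if i ∈ S then {f i} else univ := by
    ext σ
    simp only [mem_filter, mem_univ, true_and, Fintype.mem_piFinset]
    refine forall_congr' fun i => ?_
    split_ifs <;> simp [*]
  rw [hpi, Fintype.card_piFinset]
  simp [apply_ite, prod_ite, filter_not, compl_eq_univ_sdiff]

theorem logb_card_le_of_sum_rpow_neg_le_one {V : Type*} [Fintype V] (d : V → ℝ)
    (hd : ∑ v, (2 : ℝ) ^ (-d v) ≤ 1) :
    Real.logb 2 (Fintype.card V) ≤ (∑ v, d v) / Fintype.card V := by
  rcases (Fintype.card V).eq_zero_or_pos with hV | hV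
  · simp [hV]
  set m : ℝ := (Fintype.card V : ℝ)
  have hm : 0 < m := by positivity
  have hjensen := (convexOn_rpow_left two_pos).map_sum_le (t := univ) (w := fun _ => m⁻¹)
    (p := fun v => -d v) (fun _ _ => by positivity) (by simp [m, hm.ne']) (fun _ _ => trivial)
  have hle : (2 : ℝ) ^ (-((∑ v, d v) / m)) ≤ m⁻¹ := by
    calc (2 : ℝ) ^ (-((∑ v, d v) / m)) = (2 : ℝ) ^ (∑ v, m⁻¹ • -d v) := by
          simp [← mul_sum, div_eq_inv_mul]
      _ ≤ ∑ v, m⁻¹ • (2 : ℝ) ^ (-d v) := hjensen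
      _ = m⁻¹ * ∑ v, (2 : ℝ) ^ (-d v) := by simp [mul_sum]
      _ ≤ m⁻¹ := mul_le_of_le_one_right (by positivity) hd
  rw [Real.logb_le_iff_le_rpow one_lt_two hm]
  rw [Real.rpow_neg zero_le_two] at hle
  exact (inv_le_inv₀ (by positivity) hm).1 hle

namespace SimpleGraph

variable {V ι : Type*} [Fintype V] [Fintype ι]

open Classical in
noncomputable def supportMultiplicity (G : ι → SimpleGraph V) (v : V) : ℕ :=
  #{i | v ∈ (G i).support}

theorem sum_supportMultiplicity (G : ι → SimpleGraph V) :
    ∑ v, supportMultiplicity G v = ∑ i, (G i).support.ncard := by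
  classical
  simp only [supportMultiplicity, Set.ncard_eq_toFinset_card', ← Set.filter_mem_univ_eq_toFinset]
  exact sum_card_bipartiteAbove_eq_sum_card_bipartiteBelow (fun v i => v ∈ (G i).support)

variable {G : ι → SimpleGraph V} (c : ι → V → Bool)

theorem sum_two_pow_card_sub_supportMultiplicity_le
    (hc : ∀ i u v, (G i).Adj u v → c i u ≠ c i v)
    (hcover : ∀ u v, u ≠ v → ∃ i, (G i).Adj u v) :
    ∑ v, 2 ^ (Fintype.card ι - supportMultiplicity G v) ≤ 2 ^ Fintype.card ι := by
  classical
  let Agrees (σ : ι → Bool) (v : V) : Prop :=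
    ∀ i ∈ ({i | v ∈ (G i).support} : Finset ι), σ i = c i v
  have hcount (v : V) : #{σ | Agrees σ v} = 2 ^ (Fintype.card ι - supportMultiplicity G v) := by
    simp only [Agrees, card_filter_forall_mem_eq_pow_card_compl, Fintype.card_bool, card_compl]
    rfl
  have hunique (σ : ι → Bool) : #{v | Agrees σ v} ≤ 1 := by
    refine card_le_one.2 fun u hu v hv => by_contra fun huv => ?_
    obtain ⟨i, hi⟩ := hcover u v huv
    simp only [Agrees, mem_filter, mem_univ, true_and] at hu hv
    exact hc i u v hi ((hu i ⟨v, hi⟩).symm.trans (hv i ⟨u, hi.symm⟩))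
  calc ∑ v, 2 ^ (Fintype.card ι - supportMultiplicity G v)
      = ∑ v, #{σ | Agrees σ v} := by simp only [hcount]
    _ = ∑ σ, #{v | Agrees σ v} :=
      sum_card_bipartiteAbove_eq_sum_card_bipartiteBelow (fun v σ => Agrees σ v)
    _ ≤ ∑ _σ : ι → Bool, 1 := sum_le_sum fun σ _ => hunique σ
    _ = 2 ^ Fintype.card ι := by simp

theorem sum_rpow_neg_supportMultiplicity_le_one
    (hc : ∀ i u v, (G i).Adj u v → c i u ≠ c i v)
    (hcover : ∀ u v, u ≠ v → ∃ i, (G i).Adj u v) :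
    ∑ v, (2 : ℝ) ^ (-(supportMultiplicity G v : ℝ)) ≤ 1 := by
  have hkraft : (∑ v, 2 ^ (Fintype.card ι - supportMultiplicity G v) : ℝ) ≤
      2 ^ Fintype.card ι := by
    exact_mod_cast sum_two_pow_card_sub_supportMultiplicity_le c hc hcover
  have hle (v : V) : supportMultiplicity G v ≤ Fintype.card ι := card_le_univ _
  calc ∑ v, (2 : ℝ) ^ (-(supportMultiplicity G v : ℝ))
      = (∑ v, (2 : ℝ) ^ (Fintype.card ι - supportMultiplicity G v)) / 2 ^ Fintype.card ι := by
        rw [sum_div]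
        refine sum_congr rfl fun v _ => ?_
        rw [Real.rpow_neg zero_le_two, Real.rpow_natCast, pow_sub₀ _ two_ne_zero (hle v)]
        field_simp
    _ ≤ 1 := div_le_one_of_le₀ hkraft (by positivity)

end SimpleGraph

theorem stmt0_general (m t : ℕ) (G : Fin t → SimpleGraph (Fin m))
    (hbip : ∀ i, ∃ A B : Finset (Fin m), Disjoint A B ∧
      ∀ u v, (G i).Adj u v → (u ∈ A ∧ v ∈ B) ∨ (u ∈ B ∧ v ∈ A))
    (hcover : ∀ u v : Fin m, u ≠ v → ∃ i, (G i).Adj u v) :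
    Real.logb 2 m ≤ ∑ i : Fin t,
      (Set.ncard {v : Fin m | ∃ u, (G i).Adj v u} : ℝ) / m := by
  choose A B hAB hadj using hbip
  have hproper : ∀ i u v, (G i).Adj u v → decide (u ∈ A i) ≠ decide (v ∈ A i) := by
    intro i u v huv
    rcases hadj i u v huv with ⟨hu, hv⟩ | ⟨hu, hv⟩
    · simp [hu, disjoint_right.1 (hAB i) hv]
    · simp [hv, disjoint_right.1 (hAB i) hu]
  have hkraft := SimpleGraph.sum_rpow_neg_supportMultiplicity_le_one _ hproper hcover
  have hlog := logb_card_le_of_sum_rpow_neg_le_one _ hkraft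
  rwa [← Nat.cast_sum, SimpleGraph.sum_supportMultiplicity, Nat.cast_sum, sum_div,
    Fintype.card_fin] at hlog

/-- Hansel's lemma: if bipartite graphs `G 1, ..., G t` cover the complete graph on
`m` vertices, then `log₂ m ≤ ∑ τ(G i)`, where `τ(G i)` is the fraction of
non-isolated vertices of `G i`. -/
theorem stmt0 (m t : ℕ) (hm : 1 ≤ m) (G : Fin t → SimpleGraph (Fin m))
    (hbip : ∀ i, ∃ A B : Finset (Fin m), Disjoint A B ∧
      ∀ u v, (G i).Adj u v → (u ∈ A ∧ v ∈ B) ∨ (u ∈ B ∧ v ∈ A))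
    (hcover : ∀ u v : Fin m, u ≠ v → ∃ i, (G i).Adj u v) :
    Real.logb 2 m ≤ ∑ i : Fin t,
      (Set.ncard {v : Fin m | ∃ u, (G i).Adj v u} : ℝ) / m :=
  stmt0_general m t G hbip hcover
end

section
/- For every integer $k \ge 4$ and every probability vector $f \in \mathbb{R}^k$, $\phi_k(f,f) \le k!/k^{k-1}$, where $\phi_k(f,f) = (k-1)! S_{k-1}^k(f)$. -/
/-!
With `∑ f = 1` the bound is Maclaurin's inequality `e_{k-1}(f) / k ≤ (e_1(f) / k) ^ (k-1)`.
It is proved by induction on the number of variables: splitting off one variable `a` gives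
`e_{n+1}(a, t) = e_{n+1}(t) + a * e_n(t)`, where `e_{n+1}(t) = ∏ t` is bounded by AM-GM and
`e_n(t)` by induction. The two bounds combine through Bernoulli's inequality, used as the tangent
line of `x ↦ x ^ m` at the point where all variables are equal. AM-GM itself follows by the same
induction.
-/

theorem succ_pow_succ_mul_mul_le_add_pow_succ {n : ℕ} {a P S : ℝ} (ha : 0 ≤ a) (hS : 0 ≤ S)
    (h : (n : ℝ) ^ n * P ≤ S ^ n) :
    ((n : ℝ) + 1) ^ (n + 1) * (a * P) ≤ (a + S) ^ (n + 1) := by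
  rcases Nat.eq_zero_or_pos n with rfl | hn
  · simp only [pow_zero, one_mul, CharP.cast_eq_zero, zero_add, pow_one] at h ⊢
    nlinarith
  have hn' : (0 : ℝ) < n := by exact_mod_cast hn
  -- tangent at `a = S / n`, where `a` equals the mean of the other `n` variables
  have bernoulli := pow_add_mul_le_add_pow (a := ((n : ℝ) + 1) * S) (b := n * a - S)
    (by positivity) (by nlinarith) (n + 1)
  refine le_of_mul_le_mul_left ?_ (pow_pos hn' (n + 1))
  calc (n : ℝ) ^ (n + 1) * (((n : ℝ) + 1) ^ (n + 1) * (a * P))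
      = n * ((n + 1) ^ (n + 1) * a) * (n ^ n * P) := by ring
    _ ≤ n * ((n + 1) ^ (n + 1) * a) * S ^ n := by gcongr
    _ = ((n + 1) * S) ^ (n + 1)
          + ((n + 1 : ℕ) : ℝ) * ((n + 1) * S) ^ (n + 1 - 1) * (n * a - S) := by
        simp only [Nat.add_sub_cancel, mul_pow]; push_cast; ring
    _ ≤ ((n + 1) * S + (n * a - S)) ^ (n + 1) := bernoulli
    _ = (n : ℝ) ^ (n + 1) * (a + S) ^ (n + 1) := by rw [← mul_pow]; ring_nf

theorem add_three_pow_succ_mul_add_mul_le_add_pow {n : ℕ} {a P E S : ℝ} (ha : 0 ≤ a)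
    (hS : 0 ≤ S) (hP : ((n : ℝ) + 2) ^ (n + 2) * P ≤ S ^ (n + 2))
    (hE : ((n : ℝ) + 2) ^ n * E ≤ S ^ (n + 1)) :
    ((n : ℝ) + 3) ^ (n + 1) * (P + a * E) ≤ (a + S) ^ (n + 2) := by
  -- tangent at `a = S / (n + 2)`, where `a` equals the mean of the other `n + 2` variables
  have bernoulli := pow_add_mul_le_add_pow (a := ((n : ℝ) + 3) * S) (b := (n + 2) * a - S)
    (by positivity) (by nlinarith) (n + 2)
  refine le_of_mul_le_mul_left ?_ (by positivity : (0 : ℝ) < ((n : ℝ) + 2) ^ (n + 2))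
  calc ((n : ℝ) + 2) ^ (n + 2) * (((n : ℝ) + 3) ^ (n + 1) * (P + a * E))
      = ((n : ℝ) + 3) ^ (n + 1) *
          ((n + 2) ^ (n + 2) * P + (n + 2) ^ 2 * a * ((n + 2) ^ n * E)) := by ring
    _ ≤ ((n : ℝ) + 3) ^ (n + 1) * (S ^ (n + 2) + (n + 2) ^ 2 * a * S ^ (n + 1)) := by gcongr
    _ = ((n + 3) * S) ^ (n + 2)
          + ((n + 2 : ℕ) : ℝ) * ((n + 3) * S) ^ (n + 2 - 1) * ((n + 2) * a - S) := by
        simp only [mul_pow]; push_cast; ring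
    _ ≤ ((n + 3) * S + ((n + 2) * a - S)) ^ (n + 2) := bernoulli
    _ = ((n : ℝ) + 2) ^ (n + 2) * (a + S) ^ (n + 2) := by rw [← mul_pow]; ring_nf

namespace Multiset

variable {R : Type*} [CommSemiring R]

theorem esymm_cons_succ (a : R) (s : Multiset R) (n : ℕ) :
    (a ::ₘ s).esymm (n + 1) = s.esymm (n + 1) + a * s.esymm n := by
  simp [esymm, map_map, sum_map_mul_left]

theorem esymm_card (s : Multiset R) : s.esymm (card s) = s.prod := by
  simp [esymm, powersetCard_self]

theorem card_pow_mul_prod_le_sum_pow (s : Multiset ℝ) (hs : ∀ x ∈ s, 0 ≤ x) :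
    (card s : ℝ) ^ card s * s.prod ≤ s.sum ^ card s := by
  induction s using Multiset.induction with
  | empty => simp
  | cons a t ih =>
    have ht : ∀ x ∈ t, 0 ≤ x := fun x hx => hs x (mem_cons_of_mem hx)
    simpa using
      succ_pow_succ_mul_mul_le_add_pow_succ (hs a (mem_cons_self a t)) (sum_nonneg ht) (ih ht)

theorem pow_mul_esymm_le_sum_pow (n : ℕ) (s : Multiset ℝ) (hs : ∀ x ∈ s, 0 ≤ x)
    (hcard : card s = n + 2) : ((n : ℝ) + 2) ^ n * s.esymm (n + 1) ≤ s.sum ^ (n + 1) := by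
  induction n generalizing s with
  | zero =>
    obtain ⟨x, y, rfl⟩ := card_eq_two.mp hcard
    simp
  | succ n ih =>
    obtain ⟨a, t, rfl, ht⟩ := card_eq_succ_iff.mp hcard
    have ht0 : ∀ x ∈ t, 0 ≤ x := fun x hx => hs x (mem_cons_of_mem hx)
    have amgm := card_pow_mul_prod_le_sum_pow t ht0
    rw [ht] at amgm
    rw [esymm_cons_succ, ← ht, esymm_card, ht, sum_cons]
    push_cast at amgm ⊢
    rw [show (n : ℝ) + 1 + 2 = n + 3 by ring]
    exact add_three_pow_succ_mul_add_mul_le_add_pow (hs a (mem_cons_self a t)) (sum_nonneg ht0)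
      amgm (ih t ht0 ht)

end Multiset

/-- Fredman–Komlós bound on the diagonal: for every probability vector `f ∈ ℝ^k`,
`φ_k(f,f) = (k-1)! · S_{k-1}^k(f) ≤ k! / k^{k-1}`. -/
theorem stmt4 (k : ℕ) (hk : 4 ≤ k) (f : Fin k → ℝ)
    (hf0 : ∀ a, 0 ≤ f a) (hf1 : ∑ a, f a = 1) :
    (Nat.factorial (k - 1) : ℝ) *
        ∑ A ∈ Finset.univ.powersetCard (k - 1), ∏ a ∈ A, f a
      ≤ (Nat.factorial k : ℝ) / (k : ℝ) ^ (k - 1) := by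
  obtain ⟨n, rfl⟩ : ∃ n, k = n + 2 := ⟨k - 2, by omega⟩
  have maclaurin := Multiset.pow_mul_esymm_le_sum_pow n (Finset.univ.val.map f)
    (Multiset.forall_mem_map_iff.mpr fun a _ => hf0 a) (by simp)
  rw [Finset.esymm_map_val, Finset.sum_map_val, hf1, one_pow] at maclaurin
  rw [show n + 2 - 1 = n + 1 by omega, le_div_iff₀ (by positivity)]
  calc _ = ((n + 1).factorial * ((n : ℝ) + 2)) *
        (((n : ℝ) + 2) ^ n * ∑ A ∈ Finset.univ.powersetCard (n + 1), ∏ a ∈ A, f a) := by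
        push_cast; ring
    _ ≤ (n + 1).factorial * ((n : ℝ) + 2) := mul_le_of_le_one_right (by positivity) maclaurin
    _ = (n + 2).factorial := by push_cast [Nat.factorial_succ (n + 1)]; ring
end

section
/- Let $k \ge 4$ and let $f \in \mathbb{R}^k$ be a probability vector with $f_k < \gamma$ for some $\gamma$ with $\frac{1}{2k-3} \le \gamma \le \frac1k$. Then $(k-1)! \, S_{k-1}^k(f) \le G_k\left(\frac{1-\gamma}{k-1}\right)$, where $G_k(y) = (k-1)! \, y^{k-2}\big((k-1) - (k^2-2k)y\big)$. -/
/-! Write `t` for the last coordinate and `r = (1 - t) / (k - 1)` for the mean of the others.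
Splitting off the last coordinate, `S_{k-1}^k(f) = ∏_{i<k} f_i + t S_{k-2}^{k-1}(f_1, …, f_{k-1})`,
and AM-GM together with Maclaurin's inequality `S_{n-1}^n ≤ n · mean^{n-1}` bound this by
`φ(r) = r^{k-2} ((k-1) - (k²-2k) r)`. Since `φ` decreases on `[1/k, ∞)` and
`1/k ≤ (1-γ)/(k-1) < r`, we get `φ(r) ≤ φ((1-γ)/(k-1))`. Maclaurin's inequality itself follows by
induction from the same splitting, maximizing `φ` instead. The monotonicity of `r ↦ r^p (A - B r)`
on either side of its maximum comes from Bernoulli's inequality. -/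

open Finset

theorem prod_le_sum_div_card_pow {ι : Type*} {s : Finset ι} {g : ι → ℝ}
    (hg : ∀ i ∈ s, 0 ≤ g i) : ∏ i ∈ s, g i ≤ ((∑ i ∈ s, g i) / #s) ^ #s := by
  rcases s.eq_empty_or_nonempty with rfl | hs
  · simp
  have hn : (#s : ℝ) ≠ 0 := by positivity
  have amgm := Real.geom_mean_le_arith_mean_weighted s (fun _ => (#s : ℝ)⁻¹) g
    (fun _ _ => by positivity) (by simp [hn]) hg
  rw [Real.finsetProd_rpow s g hg, ← mul_sum, inv_mul_eq_div] at amgm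
  calc ∏ i ∈ s, g i = ((∏ i ∈ s, g i) ^ (#s : ℝ)⁻¹) ^ #s :=
        (Real.rpow_inv_natCast_pow (prod_nonneg hg) hs.card_ne_zero).symm
    _ ≤ ((∑ i ∈ s, g i) / #s) ^ #s := by gcongr; exact Real.rpow_nonneg (prod_nonneg hg) _

theorem pow_mul_sub_mul_antitoneOn {p : ℕ} {A B ρ : ℝ} (hB : 0 ≤ B) (hρ : 0 ≤ ρ)
    (h : p * A ≤ (p + 1) * B * ρ) :
    AntitoneOn (fun r : ℝ => r ^ p * (A - B * r)) (Set.Ici ρ) := by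
  intro u hu r hr hur
  simp only [Set.mem_Ici] at hu hr
  have hu0 : 0 ≤ u := hρ.trans hu
  have hr0 : 0 ≤ r := hu0.trans hur
  have hBu : B * u ≤ B * r := mul_le_mul_of_nonneg_left hur hB
  have hBρ : B * ρ ≤ B * u := mul_le_mul_of_nonneg_left hu hB
  rcases le_or_gt (A - B * u) 0 with hneg | hpos
  · calc r ^ p * (A - B * r) ≤ r ^ p * (A - B * u) := by gcongr
      _ ≤ u ^ p * (A - B * u) :=
        mul_le_mul_of_nonpos_right (pow_le_pow_left₀ hu0 hur p) hneg
  · have bernoulli : r ^ p + p * r ^ (p - 1) * (u - r) ≤ u ^ p := by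
      simpa using pow_add_mul_le_add_pow (a := r) (b := u - r) (by linarith) (by linarith) p
    rcases p with _ | q
    · simp only [pow_zero, one_mul]
      linarith
    · simp only [Nat.add_sub_cancel, pow_succ] at bernoulli ⊢
      push_cast at h bernoulli
      have hrq : 0 ≤ r ^ q := pow_nonneg hr0 q
      nlinarith [mul_nonneg (mul_nonneg hrq (sub_nonneg.2 hur))
        (show 0 ≤ B * r - (q + 1) * (A - B * u) by nlinarith)]

theorem pow_mul_sub_mul_monotoneOn {p : ℕ} {A B ρ : ℝ} (hB : 0 ≤ B)
    (h : (p + 1) * B * ρ ≤ p * A) :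
    MonotoneOn (fun r : ℝ => r ^ p * (A - B * r)) (Set.Icc 0 ρ) := by
  rintro u ⟨hu0, -⟩ r ⟨-, hr⟩ hur
  have bernoulli : u ^ p + p * u ^ (p - 1) * (r - u) ≤ r ^ p := by
    simpa using pow_add_mul_le_add_pow (a := u) (b := r - u) hu0 (by linarith) p
  have hBr : (p + 1) * B * r ≤ p * A := le_trans (by gcongr) h
  rcases p with _ | q
  · push_cast at hBr
    simp only [pow_zero, one_mul]
    nlinarith
  · simp only [Nat.add_sub_cancel, pow_succ] at bernoulli ⊢
    push_cast at hBr bernoulli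
    have huq : 0 ≤ u ^ q := pow_nonneg hu0 q
    have hABr : 0 ≤ A - B * r := by nlinarith
    nlinarith [mul_nonneg (mul_nonneg huq (sub_nonneg.2 hur))
      (show 0 ≤ (q + 1) * (A - B * r) - B * u by nlinarith), mul_le_mul_of_nonneg_right bernoulli hABr]

theorem pow_mul_sub_mul_le_of_eq {p : ℕ} {A B r ρ : ℝ} (hB : 0 ≤ B) (hr : 0 ≤ r) (hρ : 0 ≤ ρ)
    (h : (p + 1) * B * ρ = p * A) :
    r ^ p * (A - B * r) ≤ ρ ^ p * (A - B * ρ) := by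
  rcases le_total r ρ with hrρ | hρr
  · exact pow_mul_sub_mul_monotoneOn hB h.le ⟨hr, hrρ⟩ ⟨hρ, le_rfl⟩ hrρ
  · exact pow_mul_sub_mul_antitoneOn hB hρ h.ge (Set.mem_Ici.2 le_rfl) (Set.mem_Ici.2 hρr) hρr

theorem sum_powersetCard_succ_insert_prod {ι R : Type*} [DecidableEq ι] [CommSemiring R]
    {s : Finset ι} {a : ι} (ha : a ∉ s) (g : ι → R) (n : ℕ) :
    ∑ t ∈ (insert a s).powersetCard (n + 1), ∏ i ∈ t, g i
      = ∑ t ∈ s.powersetCard (n + 1), ∏ i ∈ t, g i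
        + g a * ∑ t ∈ s.powersetCard n, ∏ i ∈ t, g i := by
  simp only [← esymm_map_val, insert_val_of_notMem ha, Multiset.map_cons, Multiset.esymm,
    Multiset.powersetCard_cons, Multiset.map_add, Multiset.sum_add, Multiset.map_map,
    Function.comp_def, Multiset.prod_cons, Multiset.sum_map_mul_left]

theorem sum_powersetCard_card_insert_prod_le {ι : Type*} [DecidableEq ι] {s : Finset ι} {a : ι}
    {g : ι → ℝ} (ha : a ∉ s) (hs : s.Nonempty) (hg : ∀ i ∈ insert a s, 0 ≤ g i)
    (hs_le : ∑ t ∈ s.powersetCard (#s - 1), ∏ i ∈ t, g i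
      ≤ #s * ((∑ i ∈ s, g i) / #s) ^ (#s - 1)) :
    ∑ t ∈ (insert a s).powersetCard #s, ∏ i ∈ t, g i
      ≤ ((∑ i ∈ s, g i) / #s) ^ (#s - 1)
        * (#s * ∑ i ∈ insert a s, g i - ((#s : ℝ) ^ 2 - 1) * ((∑ i ∈ s, g i) / #s)) := by
  obtain ⟨n, hn⟩ : ∃ n, #s = n + 1 := Nat.exists_eq_add_one.2 hs.card_pos
  have hgs : ∀ i ∈ s, 0 ≤ g i := fun i hi => hg i (mem_insert_of_mem hi)
  have hprod := prod_le_sum_div_card_pow hgs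
  set r := (∑ i ∈ s, g i) / #s
  have hsum : ∑ i ∈ s, g i = #s * r := by
    rw [mul_div_cancel₀ _ (by positivity : (#s : ℝ) ≠ 0)]
  have hsplit : ∑ t ∈ (insert a s).powersetCard #s, ∏ i ∈ t, g i
      = ∏ i ∈ s, g i + g a * ∑ t ∈ s.powersetCard (#s - 1), ∏ i ∈ t, g i := by
    conv_lhs => rw [hn, sum_powersetCard_succ_insert_prod ha, ← hn, powersetCard_self,
      sum_singleton]
    rw [hn, Nat.add_sub_cancel]
  calc ∑ t ∈ (insert a s).powersetCard #s, ∏ i ∈ t, g i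
      ≤ r ^ #s + g a * (#s * r ^ (#s - 1)) := by
        rw [hsplit]
        gcongr
        exact hg a (mem_insert_self a s)
    _ = r ^ (#s - 1) * (#s * ∑ i ∈ insert a s, g i - ((#s : ℝ) ^ 2 - 1) * r) := by
        rw [sum_insert ha, hsum, hn, Nat.add_sub_cancel, pow_succ]
        ring

theorem sum_powersetCard_card_sub_one_prod_le {ι : Type*} [DecidableEq ι] {s : Finset ι}
    {g : ι → ℝ} (hs : s.Nonempty) (hg : ∀ i ∈ s, 0 ≤ g i) :
    ∑ t ∈ s.powersetCard (#s - 1), ∏ i ∈ t, g i ≤ #s * ((∑ i ∈ s, g i) / #s) ^ (#s - 1) := by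
  induction hs using Nonempty.cons_induction with
  | singleton a => simp
  | cons a s ha hs ih =>
    rw [cons_eq_insert] at hg ⊢
    have hsplit := sum_powersetCard_card_insert_prod_le ha hs hg
      (ih fun i hi => hg i (mem_insert_of_mem hi))
    obtain ⟨n, hn⟩ : ∃ n, #s = n + 1 := Nat.exists_eq_add_one.2 hs.card_pos
    set T := ∑ i ∈ insert a s, g i
    have hT : 0 ≤ T := sum_nonneg hg
    rw [card_insert_of_notMem ha, Nat.add_sub_cancel]
    refine hsplit.trans ?_
    rw [hn, Nat.add_sub_cancel]
    push_cast
    have hr : 0 ≤ (∑ i ∈ s, g i) / (n + 1) :=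
      div_nonneg (sum_nonneg fun i hi => hg i (mem_insert_of_mem hi)) (by positivity)
    obtain ⟨ρ, hρ⟩ : ∃ ρ, T = (n + 2) * ρ := ⟨T / (n + 2), by field_simp⟩
    have hρ0 : 0 ≤ ρ := by nlinarith
    calc _ ≤ ρ ^ n * ((n + 1) * T - ((n + 1) ^ 2 - 1) * ρ) :=
          pow_mul_sub_mul_le_of_eq (by nlinarith [n.cast_nonneg (α := ℝ)]) hr hρ0 (by rw [hρ]; ring)
      _ = (n + 1 + 1) * (T / (n + 1 + 1)) ^ (n + 1) := by
          rw [hρ, show (n : ℝ) + 1 + 1 = n + 2 by ring, mul_div_cancel_left₀ _ (by positivity)]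
          ring

theorem sum_powersetCard_card_sub_one_prod_le_of_sum_eq_one {ι : Type*} [Fintype ι]
    [DecidableEq ι] {g : ι → ℝ} (hg : ∀ i, 0 ≤ g i) (hg1 : ∑ i, g i = 1) (a : ι)
    (hcard : 2 ≤ Fintype.card ι) :
    ∑ t ∈ univ.powersetCard (Fintype.card ι - 1), ∏ i ∈ t, g i
      ≤ ((1 - g a) / (Fintype.card ι - 1)) ^ (Fintype.card ι - 2)
        * ((Fintype.card ι - 1) - ((Fintype.card ι : ℝ) ^ 2 - 2 * Fintype.card ι)
          * ((1 - g a) / (Fintype.card ι - 1))) := by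
  have hs : #(univ.erase a) = Fintype.card ι - 1 := card_erase_of_mem (mem_univ a)
  have hne : (univ.erase a).Nonempty := by rw [← card_pos, hs]; omega
  have key := sum_powersetCard_card_insert_prod_le (notMem_erase a univ) hne (fun i _ => hg i)
    (sum_powersetCard_card_sub_one_prod_le hne fun i _ => hg i)
  rw [insert_erase (mem_univ a), hg1, hs, sum_erase_eq_sub (mem_univ a), hg1,
    Nat.cast_sub (by omega), Nat.sub_sub] at key
  convert key using 3 <;> push_cast <;> ring

/-- If `f ∈ ℝ^k` is a probability vector whose last coordinate satisfies `f_k < γ`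
with `1/(2k-3) ≤ γ ≤ 1/k`, then `(k-1)! S_{k-1}^k(f) ≤ G_k((1-γ)/(k-1))`, where
`G_k(y) = (k-1)! y^{k-2} ((k-1) - (k²-2k) y)`. -/
theorem stmt5 (k : ℕ) (hk : 4 ≤ k) (γ : ℝ)
    (hγ2 : γ ≤ 1 / (k : ℝ))
    (f : Fin k → ℝ) (hf0 : ∀ a, 0 ≤ f a) (hf1 : ∑ a, f a = 1)
    (hlast : f ⟨k - 1, by omega⟩ < γ) :
    (Nat.factorial (k - 1) : ℝ) *
        ∑ A ∈ Finset.univ.powersetCard (k - 1), ∏ a ∈ A, f a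
      ≤ (Nat.factorial (k - 1) : ℝ) * ((1 - γ) / ((k : ℝ) - 1)) ^ (k - 2) *
          (((k : ℝ) - 1) - ((k : ℝ) ^ 2 - 2 * k) * ((1 - γ) / ((k : ℝ) - 1))) := by
  have hkR : (4 : ℝ) ≤ k := by exact_mod_cast hk
  have hkγ : k * γ ≤ 1 := by rwa [le_div_iff₀ (by positivity), mul_comm] at hγ2
  have hsplit := sum_powersetCard_card_sub_one_prod_le_of_sum_eq_one hf0 hf1 ⟨k - 1, by omega⟩
    (by rw [Fintype.card_fin]; omega)
  simp only [Fintype.card_fin] at hsplit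
  set u := (1 - γ) / ((k : ℝ) - 1)
  have hu : u * ((k : ℝ) - 1) = 1 - γ := div_mul_cancel₀ _ (by linarith)
  have hanti := pow_mul_sub_mul_antitoneOn (p := k - 2) (A := (k : ℝ) - 1)
    (B := (k : ℝ) ^ 2 - 2 * k) (ρ := u) (by nlinarith) (div_nonneg (by nlinarith) (by linarith))
    (by rw [Nat.cast_sub (by omega)]; push_cast; nlinarith)
  have hur : u ≤ (1 - f ⟨k - 1, by omega⟩) / ((k : ℝ) - 1) :=
    div_le_div_of_nonneg_right (by linarith) (by linarith)
  rw [mul_assoc]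
  exact mul_le_mul_of_nonneg_left
    (hsplit.trans (hanti (Set.mem_Ici.2 le_rfl) (Set.mem_Ici.2 hur) hur)) (by positivity)
end

section
/- For integer $k \ge 4$ and $0 \le \gamma < 1/k$, it holds that $\xi_k(\gamma) < \alpha_k$, where $\xi_k(\gamma) = \frac{(k-2)!\,(1-\gamma)^{k-2}\,\big((k^2-2k)\gamma + 1\big)}{(k-1)^{k-2}}$ and $\alpha_k = k!/k^{k-1}$; moreover $\xi_k(1/k) = \alpha_k$. -/
/-!
With `G k y = (k-1)! y^(k-2) ((k-1) - (k²-2k) y)` one has `ξ_k(γ) = G k ((1-γ)/(k-1))` and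
`α_k = G k (1/k)`. Up to the factor `k!`, `G k y` is the tangent line of `x ↦ x^(k-1)` at `y`,
evaluated at `1/k`; by strict convexity (Bernoulli) it lies below `(1/k)^(k-1)` unless `y = 1/k`.
Finally `γ < 1/k` means `(1-γ)/(k-1) > 1/k`.
-/

open Nat

def G (k : ℕ) (y : ℝ) : ℝ := (k - 1)! * y ^ (k - 2) * ((k - 1) - (k ^ 2 - 2 * k) * y)

lemma pow_succ_add_tangent_lt {n : ℕ} (hn : 1 ≤ n) {c t : ℝ} (hc : 0 ≤ c) (ht : 0 < t)
    (hct : c ≠ t) : t ^ (n + 1) + (n + 1) * t ^ n * (c - t) < c ^ (n + 1) := by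
  have hs : -1 ≤ c / t - 1 := by have := div_nonneg hc ht.le; linarith
  have hs0 : c / t - 1 ≠ 0 := by
    rw [sub_ne_zero, Ne, div_eq_one_iff_eq ht.ne']; exact hct
  have hp : (1 : ℝ) < (n + 1 : ℕ) := by exact_mod_cast Nat.lt_succ_of_le hn
  have bernoulli := one_add_mul_self_lt_rpow_one_add hs hs0 hp
  rw [add_sub_cancel, Real.rpow_natCast, div_pow, lt_div_iff₀ (by positivity)] at bernoulli
  calc t ^ (n + 1) + (n + 1) * t ^ n * (c - t)
      = (1 + ((n + 1 : ℕ) : ℝ) * (c / t - 1)) * t ^ (n + 1) := by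
        field_simp; push_cast; ring
    _ < c ^ (n + 1) := bernoulli

lemma G_inv_self {k : ℕ} (hk : 2 ≤ k) : G k (1 / k) = k ! / (k : ℝ) ^ (k - 1) := by
  obtain ⟨n, rfl⟩ := Nat.exists_eq_add_of_le' hk
  simp only [G, Nat.add_sub_cancel, show n + 2 - 1 = n + 1 by omega, Nat.factorial_succ (n + 1)]
  push_cast
  simp only [div_pow, one_pow]
  field_simp
  ring

lemma G_lt_G_inv {k : ℕ} (hk : 3 ≤ k) {y : ℝ} (hy : 0 < y) (hne : y ≠ 1 / k) :
    G k y < G k (1 / k) := by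
  obtain ⟨n, rfl⟩ := Nat.exists_eq_add_of_le' (show 2 ≤ k by omega)
  have tangent := pow_succ_add_tangent_lt (n := n) (by omega) (by positivity) hy
    (Ne.symm (by exact_mod_cast hne) : 1 / ((n : ℝ) + 2) ≠ y)
  have hpos : (0 : ℝ) < (n + 1)! * (n + 2) := by positivity
  simp only [G, Nat.add_sub_cancel, show n + 2 - 1 = n + 1 by omega]
  push_cast
  calc ((n + 1)! : ℝ) * y ^ n * (n + 2 - 1 - ((n + 2) ^ 2 - 2 * (n + 2)) * y)
      = (n + 1)! * (n + 2) * (y ^ (n + 1) + (n + 1) * y ^ n * (1 / (n + 2) - y)) := by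
        field_simp; ring
    _ < (n + 1)! * (n + 2) * (1 / (n + 2)) ^ (n + 1) := mul_lt_mul_of_pos_left tangent hpos
    _ = _ := by simp only [div_pow, one_pow]; field_simp; ring

lemma xi_eq_G {k : ℕ} (hk : 2 ≤ k) (γ : ℝ) :
    (k - 2)! * (1 - γ) ^ (k - 2) * (((k : ℝ) ^ 2 - 2 * k) * γ + 1) / ((k : ℝ) - 1) ^ (k - 2)
      = G k ((1 - γ) / (k - 1)) := by
  obtain ⟨n, rfl⟩ := Nat.exists_eq_add_of_le' hk
  simp only [G, Nat.add_sub_cancel, show n + 2 - 1 = n + 1 by omega, Nat.factorial_succ n]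
  push_cast
  rw [show (n : ℝ) + 2 - 1 = n + 1 by ring, div_pow]
  field_simp
  ring

theorem stmt7_general (k : ℕ) (hk : 4 ≤ k) (γ : ℝ) (hγ1 : γ < 1 / (k : ℝ)) :
    (Nat.factorial (k - 2) : ℝ) * (1 - γ) ^ (k - 2) * (((k : ℝ) ^ 2 - 2 * k) * γ + 1) /
        ((k : ℝ) - 1) ^ (k - 2)
      < (Nat.factorial k : ℝ) / (k : ℝ) ^ (k - 1) ∧
    (Nat.factorial (k - 2) : ℝ) * (1 - 1 / (k : ℝ)) ^ (k - 2) *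
          (((k : ℝ) ^ 2 - 2 * k) * (1 / (k : ℝ)) + 1) / ((k : ℝ) - 1) ^ (k - 2)
      = (Nat.factorial k : ℝ) / (k : ℝ) ^ (k - 1) := by
  have hk1 : (0 : ℝ) < k - 1 := by
    have : (4 : ℝ) ≤ k := by exact_mod_cast hk
    linarith
  have hkγ : γ * k < 1 := (lt_div_iff₀ (by positivity)).mp hγ1
  have hy : 1 / (k : ℝ) < (1 - γ) / (k - 1) := by
    rw [div_lt_div_iff₀ (by positivity) hk1]
    linarith
  constructor
  · rw [xi_eq_G (by omega), ← G_inv_self (by omega)]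
    exact G_lt_G_inv (by omega) ((one_div_pos.mpr (by positivity)).trans hy) hy.ne'
  · rw [xi_eq_G (by omega), show (1 - 1 / (k : ℝ)) / (k - 1) = 1 / k by field_simp,
      G_inv_self (by omega)]

/-- For `0 ≤ γ < 1/k`, `ξ_k(γ) < α_k = k!/k^{k-1}`, where
`ξ_k(γ) = (k-2)! (1-γ)^{k-2} ((k²-2k)γ+1)/(k-1)^{k-2}`; moreover `ξ_k(1/k) = α_k`. -/
theorem stmt7 (k : ℕ) (hk : 4 ≤ k) (γ : ℝ) (hγ0 : 0 ≤ γ) (hγ1 : γ < 1 / (k : ℝ)) :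
    (Nat.factorial (k - 2) : ℝ) * (1 - γ) ^ (k - 2) * (((k : ℝ) ^ 2 - 2 * k) * γ + 1) /
        ((k : ℝ) - 1) ^ (k - 2)
      < (Nat.factorial k : ℝ) / (k : ℝ) ^ (k - 1) ∧
    (Nat.factorial (k - 2) : ℝ) * (1 - 1 / (k : ℝ)) ^ (k - 2) *
          (((k : ℝ) ^ 2 - 2 * k) * (1 / (k : ℝ)) + 1) / ((k : ℝ) - 1) ^ (k - 2)
      = (Nat.factorial k : ℝ) / (k : ℝ) ^ (k - 1) :=
  stmt7_general k hk γ hγ1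
end

section
/- Let $k \ge 4$, $C \subseteq [k]^n$ with $|C| = 2^{nR}$, and let $\ell = \lfloor (nR - \log_2 n)/\log_2\frac{k}{k-3} \rfloor$ with $\ell \ge 0$. Fix $T \subseteq [n]$ with $|T| = \ell$, and define $C_\omega$ as the set of codewords of $C$ whose symbol at each coordinate $t \in T$ lies in the $(k-3)$-element set $\omega_t$. Then there exists $\omega \in \Omega = \binom{[k]}{k-3}^T$ such that $|C_\omega| \ge n$. -/
/-!
Double counting: a codeword lies in `C_ω` for exactly `C(k-1, k-4)^ℓ` of the `C(k, k-3)^ℓ`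
tuples `ω`, so `|C_ω|` averages to `|C| ((k-3)/k)^ℓ`, and the choice of `ℓ` is exactly what
makes `|C| ((k-3)/k)^ℓ = 2^{nR} ((k-3)/k)^ℓ ≥ n`.
-/

open Finset

section SubsetTuples

variable {ι α β : Type*} [Fintype ι] [DecidableEq ι]

lemma card_piFinset_ite_mem_singleton (T : Finset ι) (A : ι → Finset β) (b : ι → β) :
    #(Fintype.piFinset fun t => if t ∈ T then A t else {b t}) = ∏ t ∈ T, #(A t) := by
  simp only [Fintype.card_piFinset, apply_ite card, card_singleton, prod_ite_mem, univ_inter]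

variable [Fintype α]

/-- Tuples `(ω_t)_{t ∈ T}` of `m`-subsets of `α`, extended by `∅` off `T` so that they form a
finset of functions on `ι`. -/
def subsetTuples (α : Type*) [Fintype α] (T : Finset ι) (m : ℕ) : Finset (ι → Finset α) :=
  Fintype.piFinset fun t => if t ∈ T then powersetCard m univ else {∅}

variable {T : Finset ι} {m : ℕ}

lemma card_of_mem_subsetTuples {ω : ι → Finset α} (hω : ω ∈ subsetTuples α T m) :
    ∀ t ∈ T, #(ω t) = m := by
  intro t ht
  have := Fintype.mem_piFinset.mp hω t
  rw [if_pos ht, mem_powersetCard_univ] at this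
  exact this

lemma subsetTuples_nonempty (hm : m ≤ Fintype.card α) : (subsetTuples α T m).Nonempty := by
  refine Fintype.piFinset_nonempty.mpr fun t => ?_
  split_ifs
  · exact powersetCard_nonempty.mpr (by simpa using hm)
  · exact singleton_nonempty _

lemma card_subsetTuples : #(subsetTuples α T m) = (Fintype.card α).choose m ^ #T := by
  rw [subsetTuples, card_piFinset_ite_mem_singleton, card_powersetCard, card_univ, prod_const]

variable [DecidableEq α]

lemma filter_subsetTuples_mem (x : ι → α) :
    {ω ∈ subsetTuples α T m | ∀ t ∈ T, x t ∈ ω t} =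
      Fintype.piFinset fun t =>
        if t ∈ T then {s ∈ powersetCard m (univ : Finset α) | x t ∈ s} else {∅} := by
  ext ω
  simp only [subsetTuples, mem_filter, Fintype.mem_piFinset, ← forall_and]
  refine forall_congr' fun t => ?_
  split_ifs <;> simp [*]

lemma card_filter_subsetTuples_mem (x : ι → α) (hm : 0 < m) :
    #{ω ∈ subsetTuples α T m | ∀ t ∈ T, x t ∈ ω t} =
      (Fintype.card α - 1).choose (m - 1) ^ #T := by
  rw [filter_subsetTuples_mem, card_piFinset_ite_mem_singleton, ← prod_const]
  refine prod_congr rfl fun t _ => ?_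
  simpa [singleton_subset_iff] using
    card_filter_powersetCard_subset {x t} univ m (subset_univ _) (by rwa [card_singleton])

lemma sum_card_filter_mem_subsetTuples (C : Finset (ι → α)) (hm : 0 < m) :
    ∑ ω ∈ subsetTuples α T m, #{x ∈ C | ∀ t ∈ T, x t ∈ ω t} =
      #C * (Fintype.card α - 1).choose (m - 1) ^ #T := by
  have := sum_card_bipartiteAbove_eq_sum_card_bipartiteBelow (s := subsetTuples α T m) (t := C)
    (fun ω x => ∀ t ∈ T, x t ∈ ω t)
  simp only [bipartiteAbove, bipartiteBelow] at this
  rw [this, sum_congr rfl fun x _ => card_filter_subsetTuples_mem x hm, sum_const, smul_eq_mul]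

/-- Averaging over `ω`: a uniformly random `m`-subset of `α` contains a given symbol with
probability `m / |α|`, independently over the coordinates of `T`. -/
theorem exists_card_mul_le_card_filter_mul (C : Finset (ι → α)) (hm0 : 0 < m)
    (hm : m ≤ Fintype.card α) :
    ∃ ω : ι → Finset α, (∀ t ∈ T, #(ω t) = m) ∧
      #C * m ^ #T ≤ #{x ∈ C | ∀ t ∈ T, x t ∈ ω t} * Fintype.card α ^ #T := by
  set K := Fintype.card α
  set B := K.choose m
  have hchoose : (K - 1).choose (m - 1) * K = m * B := by
    obtain ⟨k, hk⟩ : ∃ k, K = k + 1 := ⟨K - 1, by omega⟩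
    obtain ⟨m, rfl⟩ : ∃ m', m = m' + 1 := ⟨m - 1, by omega⟩
    simp only [B, hk, add_tsub_cancel_right]
    rw [mul_comm, Nat.add_one_mul_choose_eq, mul_comm]
  have hsum : ∑ ω ∈ subsetTuples α T m, #C * m ^ #T * B ^ #T
      ≤ ∑ ω ∈ subsetTuples α T m, #{x ∈ C | ∀ t ∈ T, x t ∈ ω t} * K ^ #T * B ^ #T := by
    rw [sum_const, card_subsetTuples, ← sum_mul, ← sum_mul,
      sum_card_filter_mem_subsetTuples C hm0, smul_eq_mul]
    refine le_of_eq ?_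
    calc B ^ #T * (#C * m ^ #T * B ^ #T) = #C * (m * B) ^ #T * B ^ #T := by ring
      _ = #C * (K - 1).choose (m - 1) ^ #T * K ^ #T * B ^ #T := by rw [← hchoose]; ring
  obtain ⟨ω, hω, hle⟩ := exists_le_of_sum_le (subsetTuples_nonempty hm) hsum
  exact ⟨ω, card_of_mem_subsetTuples hω,
    le_of_mul_le_mul_right hle (pow_pos (Nat.choose_pos hm) _)⟩

end SubsetTuples

lemma mul_pow_le_rpow_of_le_div_logb {b x y q : ℝ} {ℓ : ℕ} (hb : 1 < b) (hy : 0 ≤ y)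
    (hq : 1 < q) (hℓ : ℓ ≤ (x - Real.logb b y) / Real.logb b q) : y * q ^ ℓ ≤ b ^ x := by
  rcases hy.eq_or_lt with rfl | hy
  · rw [zero_mul]
    exact (Real.rpow_pos_of_pos (by linarith) x).le
  have hqℓ : 0 < q ^ ℓ := pow_pos (by linarith) ℓ
  rw [← Real.logb_le_iff_le_rpow hb (by positivity), Real.logb_mul hy.ne' hqℓ.ne', Real.logb_pow]
  have := (le_div_iff₀ (Real.logb_pos hb hq)).mp hℓ
  linarith

theorem stmt9_general (k n ℓ : ℕ) (hk : 4 ≤ k) (R : ℝ)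
    (C : Finset (Fin n → Fin k))
    (hR : (C.card : ℝ) = 2 ^ ((n : ℝ) * R))
    (hℓ : (ℓ : ℤ) = ⌊((n : ℝ) * R - Real.logb 2 n) / Real.logb 2 ((k : ℝ) / ((k : ℝ) - 3))⌋)
    (T : Finset (Fin n)) (hT : T.card = ℓ) :
    ∃ ω : Fin n → Finset (Fin k),
      (∀ t ∈ T, (ω t).card = k - 3) ∧
      n ≤ (C.filter (fun x => ∀ t ∈ T, x t ∈ ω t)).card := by
  obtain ⟨ω, hω, hcount⟩ :=
    exists_card_mul_le_card_filter_mul (T := T) C (m := k - 3) (by omega) (by simp)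
  refine ⟨ω, hω, ?_⟩
  rw [Fintype.card_fin, hT] at hcount
  have hk3 : ((k - 3 : ℕ) : ℝ) = k - 3 := by rw [Nat.cast_sub (by omega), Nat.cast_ofNat]
  have hk3pos : (0 : ℝ) < k - 3 := by rw [← hk3]; exact_mod_cast (by omega : 0 < k - 3)
  have hℓ_le :
      (ℓ : ℝ) ≤ ((n : ℝ) * R - Real.logb 2 n) / Real.logb 2 ((k : ℝ) / ((k : ℝ) - 3)) := by
    exact_mod_cast hℓ ▸ Int.floor_le _
  have hrate : (n : ℝ) * ((k : ℝ) / (k - 3)) ^ ℓ ≤ C.card :=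
    hR ▸ mul_pow_le_rpow_of_le_div_logb one_lt_two n.cast_nonneg
      ((one_lt_div hk3pos).mpr (by linarith)) hℓ_le
  have hcard : n * k ^ ℓ ≤ C.card * (k - 3) ^ ℓ := by
    rw [div_pow, mul_div_assoc', div_le_iff₀ (by positivity)] at hrate
    exact_mod_cast hk3 ▸ hrate
  have key := Nat.le_of_mul_le_mul_right (hcard.trans hcount) (by positivity)
  -- the two sides decide `∀ t ∈ T` by different instances
  convert key using 3

/-- If `|C| = 2^{nR}` and `ℓ = ⌊(nR - log₂ n)/log₂(k/(k-3))⌋`, then for any set `T`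
of `ℓ` coordinates there exists a tuple `ω` of `(k-3)`-element subsets of `[k]`
indexed by `T` with `|C_ω| ≥ n`. -/
theorem stmt9 (k n ℓ : ℕ) (hk : 4 ≤ k) (hn : 1 ≤ n) (R : ℝ)
    (C : Finset (Fin n → Fin k))
    (hR : (C.card : ℝ) = 2 ^ ((n : ℝ) * R))
    (hℓ : (ℓ : ℤ) = ⌊((n : ℝ) * R - Real.logb 2 n) / Real.logb 2 ((k : ℝ) / ((k : ℝ) - 3))⌋)
    (T : Finset (Fin n)) (hT : T.card = ℓ) :
    ∃ ω : Fin n → Finset (Fin k),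
      (∀ t ∈ T, (ω t).card = k - 3) ∧
      n ≤ (C.filter (fun x => ∀ t ∈ T, x t ∈ ω t)).card :=
  stmt9_general k n ℓ hk R C hR hℓ T hT
end

section
/- Let $C \subseteq [k]^n$ be a $k$-hash code with $|C| > k-2$, and let $x_1,\dots,x_{k-2}$ be distinct elements of $C$. With $G_i$ as the bipartite graph on $C\setminus\{x_1,\dots,x_{k-2}\}$ connecting pairs that together with $x_1,\dots,x_{k-2}$ have pairwise distinct $i$-th symbols, and $\tau_i$ the fraction of non-isolated vertices of $G_i$, it holds that $\log_2(|C| - k + 2) \le \sum_{i=1}^n \tau_i$. -/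
/-!
Hansel's bound: give each element `y` the subcube of `{0,1}^n` that fixes, at every coordinate
where `y` is not isolated, the side of the bipartition containing `y`. A cover of the complete
graph makes these subcubes pairwise disjoint, so `∑ 2^(-d y) ≤ 1` for the numbers `d y` of such
coordinates, and AM–GM turns this into `log₂ m ≤ (∑ d y) / m = ∑ τ_i`.

For the hash code, the hash property applied to `{y, y', x_1, …, x_{k-2}}` yields a coordinate
where `y` and `y'` are adjacent in `G_i`. There the `x_s` occupy `k - 2` symbols, so only two
symbols are left for the vertices of `G_i`, and being the larger of the two is a bipartition.
-/

open Finset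

theorem Real.logb_card_le_sum_div_card {α : Type*} {b : ℝ} (hb : 1 < b) {s : Finset α}
    (hs : s.Nonempty) (d : α → ℝ) (h : ∑ y ∈ s, b ^ (-d y) ≤ 1) :
    Real.logb b #s ≤ (∑ y ∈ s, d y) / #s := by
  have hm : (0 : ℝ) < #s := by exact_mod_cast hs.card_pos
  have hb0 : 0 < b := by linarith
  have amgm := Real.geom_mean_le_arith_mean_weighted s (fun _ => (#s : ℝ)⁻¹)
    (fun y => b ^ (-d y)) (fun _ _ => by positivity) (by simp [hm.ne']) (fun _ _ => by positivity)
  have hprod : ∏ y ∈ s, (b ^ (-d y)) ^ (#s : ℝ)⁻¹ = (b ^ ((∑ y ∈ s, d y) / #s))⁻¹ := by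
    simp_rw [← Real.rpow_mul hb0.le]
    rw [← Real.rpow_neg hb0.le, ← Real.rpow_sum_of_pos hb0, ← sum_mul, sum_neg_distrib]
    ring_nf
  have hmean : ∑ y ∈ s, (#s : ℝ)⁻¹ * b ^ (-d y) ≤ (#s : ℝ)⁻¹ := by
    rw [← mul_sum]
    exact mul_le_of_le_one_right (by positivity) h
  rw [Real.logb_le_iff_le_rpow hb hm, ← inv_le_inv₀ (by positivity) hm]
  exact hprod ▸ amgm.trans hmean

theorem sum_two_pow_sub_card_le {ι α : Type*} [Fintype ι] (s : Finset α) (D : α → Finset ι)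
    (b : α → ι → Bool)
    (hsep : (s : Set α).Pairwise fun y y' => ∃ i ∈ D y, i ∈ D y' ∧ b y i ≠ b y' i) :
    ∑ y ∈ s, 2 ^ (Fintype.card ι - #(D y)) ≤ 2 ^ Fintype.card ι := by
  classical
  let cube : α → Finset (ι → Bool) := fun y =>
    Fintype.piFinset fun i => if i ∈ D y then {b y i} else univ
  have card_cube : ∀ y, #(cube y) = 2 ^ (Fintype.card ι - #(D y)) := by
    intro y
    simp only [cube, Fintype.card_piFinset, apply_ite card, card_singleton, card_univ,
      Fintype.card_bool]
    rw [prod_ite, prod_const_one, one_mul, prod_const, filter_not, filter_mem_eq_inter,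
      univ_inter, card_sdiff_of_subset (subset_univ _), card_univ]
  have disjoint_cube : (s : Set α).PairwiseDisjoint cube := by
    intro y hy y' hy' hne
    obtain ⟨i, hi, hi', hb⟩ := hsep hy hy' hne
    refine disjoint_left.2 fun f hf hf' => hb ?_
    have hfi := Fintype.mem_piFinset.1 hf i
    have hfi' := Fintype.mem_piFinset.1 hf' i
    simp only [hi, hi', if_true, mem_singleton] at hfi hfi'
    rw [← hfi, ← hfi']
  calc ∑ y ∈ s, 2 ^ (Fintype.card ι - #(D y)) = #(s.biUnion cube) := by
        rw [card_biUnion disjoint_cube]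
        exact sum_congr rfl fun y _ => (card_cube y).symm
    _ ≤ Fintype.card (ι → Bool) := card_le_univ _
    _ = 2 ^ Fintype.card ι := by simp

theorem hansel_bound {ι α : Type*} [Fintype ι] {s : Finset α} (hs : s.Nonempty)
    (V : ι → Finset α) (hV : ∀ i, V i ⊆ s) (c : ι → α → Bool)
    (hcover : (s : Set α).Pairwise fun y y' => ∃ i, y ∈ V i ∧ y' ∈ V i ∧ c i y ≠ c i y') :
    Real.logb 2 #s ≤ ∑ i, (#(V i) : ℝ) / #s := by
  classical
  let D : α → Finset ι := fun y => univ.filter (y ∈ V ·)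
  have count := sum_two_pow_sub_card_le s D (fun y i => c i y) <|
    hcover.imp fun y y' ⟨i, hy, hy', hc⟩ => ⟨i, by simpa [D] using hy, by simpa [D] using hy', hc⟩
  have kraft : ∑ y ∈ s, (2 : ℝ) ^ (-(#(D y) : ℝ)) ≤ 1 := by
    have hterm : ∀ y, ((2 ^ (Fintype.card ι - #(D y)) : ℕ) : ℝ)
        = 2 ^ Fintype.card ι * (2 : ℝ) ^ (-(#(D y) : ℝ)) := by
      intro y
      rw [Nat.cast_pow, Nat.cast_ofNat, pow_sub₀ _ two_ne_zero (card_le_univ _),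
        Real.rpow_neg zero_le_two, Real.rpow_natCast]
    have := (Nat.cast_le (α := ℝ)).2 count
    rw [Nat.cast_sum, sum_congr rfl fun y _ => hterm y, ← mul_sum, Nat.cast_pow,
      Nat.cast_ofNat] at this
    exact le_of_mul_le_mul_left (this.trans (mul_one _).ge) (by positivity)
  have double_count : ∑ y ∈ s, (#(D y) : ℝ) = ∑ i, (#(V i) : ℝ) := by
    have := sum_card_bipartiteAbove_eq_sum_card_bipartiteBelow (s := s) (t := univ)
      (fun y i => y ∈ V i)
    simp only [bipartiteBelow, filter_mem_eq_inter, inter_eq_right.2 (hV _)] at this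
    exact_mod_cast this
  calc Real.logb 2 #s ≤ (∑ y ∈ s, (#(D y) : ℝ)) / #s :=
        Real.logb_card_le_sum_div_card one_lt_two hs _ kraft
    _ = ∑ i, (#(V i) : ℝ) / #s := by rw [double_count, sum_div]

theorem not_exists_lt_notMem_iff {β : Type*} [LinearOrder β] [Fintype β] {F : Finset β}
    (hF : Fintype.card β ≤ #F + 2) {a c : β} (ha : a ∉ F) (hc : c ∉ F) (hac : a ≠ c) :
    ¬((∃ v ∉ F, v < a) ↔ (∃ v ∉ F, v < c)) := by
  classical
  wlog h : a < c generalizing a c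
  · exact fun hiff => this hc ha hac.symm (lt_of_le_of_ne (not_lt.1 h) hac.symm) hiff.symm
  intro hiff
  obtain ⟨v, hv, hva⟩ := hiff.2 ⟨a, ha, h⟩
  have := card_le_univ (insert v (insert a (insert c F)))
  rw [card_insert_of_notMem, card_insert_of_notMem, card_insert_of_notMem hc] at this
  · omega
  · simp [ha, h.ne]
  · simp [hv, hva.ne, (hva.trans h).ne]

section HashCode

variable {m n k : ℕ}

/-- The edge relation of the graph `G_i`. -/
def HashAdj (x : Fin m → Fin n → Fin k) (i : Fin n) (y y' : Fin n → Fin k) : Prop :=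
  y i ≠ y' i ∧ (∀ s, y i ≠ x s i) ∧ (∀ s, y' i ≠ x s i) ∧ (∀ s s', s ≠ s' → x s i ≠ x s' i)

variable {x : Fin m → Fin n → Fin k}

theorem HashAdj.symm {i : Fin n} {y y' : Fin n → Fin k} (h : HashAdj x i y y') :
    HashAdj x i y' y :=
  ⟨h.1.symm, h.2.2.1, h.2.1, h.2.2.2⟩

theorem exists_hashAdj (hmk : m + 2 = k) {C : Finset (Fin n → Fin k)}
    (hhash : ∀ S : Finset (Fin n → Fin k), S ⊆ C → S.card = k →
      ∃ i : Fin n, Set.InjOn (fun y : Fin n → Fin k => y i) (S : Set (Fin n → Fin k)))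
    (hxC : ∀ s, x s ∈ C) (hxinj : Function.Injective x) {y y' : Fin n → Fin k}
    (hy : y ∈ C \ univ.image x) (hy' : y' ∈ C \ univ.image x) (hne : y ≠ y') :
    ∃ i, HashAdj x i y y' := by
  classical
  rw [mem_sdiff] at hy hy'
  set S := insert y (insert y' (univ.image x))
  have hSC : S ⊆ C := by
    simpa [S, insert_subset_iff, image_subset_iff, hy.1, hy'.1] using hxC
  have hScard : #S = k := by
    rw [card_insert_of_notMem (by simp [hne, hy.2]), card_insert_of_notMem hy'.2,
      card_image_of_injective _ hxinj, card_univ, Fintype.card_fin, hmk]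
  obtain ⟨i, hinj⟩ := hhash S hSC hScard
  have mem_y : y ∈ (S : Set (Fin n → Fin k)) := by simp [S]
  have mem_y' : y' ∈ (S : Set (Fin n → Fin k)) := by simp [S]
  have mem_x : ∀ s, x s ∈ (S : Set (Fin n → Fin k)) := by simp [S]
  refine ⟨i, hinj.ne mem_y mem_y' hne, fun s => hinj.ne mem_y (mem_x s) ?_,
    fun s => hinj.ne mem_y' (mem_x s) ?_, fun s s' hss => hinj.ne (mem_x s) (mem_x s') ?_⟩
  · rintro rfl; exact hy.2 (by simp)
  · rintro rfl; exact hy'.2 (by simp)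
  · exact hxinj.ne hss

theorem HashAdj.not_exists_lt_iff (hmk : m + 2 = k) {i : Fin n} {y y' : Fin n → Fin k}
    (h : HashAdj x i y y') :
    ¬((∃ v ∉ univ.image (x · i), v < y i) ↔ (∃ v ∉ univ.image (x · i), v < y' i)) := by
  obtain ⟨hne, hy, hy', hx⟩ := h
  refine not_exists_lt_notMem_iff ?_ ?_ ?_ hne
  · rw [card_image_of_injective _ fun s s' => not_imp_not.1 (hx s s'), card_univ,
      Fintype.card_fin, Fintype.card_fin, hmk]
  · simpa [eq_comm] using hy
  · simpa [eq_comm] using hy'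

end HashCode

/-- Hansel-type bound for `k`-hash codes: for distinct `x_1,…,x_{k-2} ∈ C`,
`log₂(|C| - k + 2) ≤ ∑_i τ_i`, where `τ_i` is the fraction of non-isolated
vertices of the graph `G_i` on `C ∖ {x_1,…,x_{k-2}}` joining pairs whose `i`-th
symbols, together with those of `x_1,…,x_{k-2}`, are pairwise distinct. -/
theorem stmt12 (k n : ℕ) (hk : 4 ≤ k) (C : Finset (Fin n → Fin k))
    (hhash : ∀ S : Finset (Fin n → Fin k), S ⊆ C → S.card = k →
      ∃ i : Fin n, Set.InjOn (fun y : Fin n → Fin k => y i) (S : Set (Fin n → Fin k)))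
    (hbig : k - 2 < C.card)
    (x : Fin (k - 2) → (Fin n → Fin k)) (hxC : ∀ s, x s ∈ C)
    (hxinj : Function.Injective x) :
    Real.logb 2 ((C.card : ℝ) - (k : ℝ) + 2)
      ≤ ∑ i : Fin n,
          (Set.ncard {y : Fin n → Fin k | y ∈ C ∧ (∀ s, y ≠ x s) ∧
              ∃ y', y' ∈ C ∧ (∀ s, y' ≠ x s) ∧ y i ≠ y' i ∧
                (∀ s, y i ≠ x s i) ∧ (∀ s, y' i ≠ x s i) ∧
                (∀ s s', s ≠ s' → x s i ≠ x s' i)} : ℝ)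
            / ((C.card : ℝ) - ((k : ℝ) - 2)) := by
  classical
  have hmk : k - 2 + 2 = k := by omega
  set C' := C \ univ.image x
  have hcard : #C' + (k - 2) = #C := by
    rw [card_sdiff_of_subset (by simpa [image_subset_iff] using hxC),
      card_image_of_injective _ hxinj, card_univ, Fintype.card_fin]
    omega
  have hC' : (#C' : ℝ) = #C - k + 2 := by
    rw [← hcard, Nat.cast_add, Nat.cast_sub (by omega : 2 ≤ k)]
    ring
  have mem_C' : ∀ y, y ∈ C' ↔ y ∈ C ∧ ∀ s, y ≠ x s := by
    simp [C', eq_comm]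
  let V i := C'.filter fun y => ∃ y' ∈ C', HashAdj x i y y'
  let side (i : Fin n) (y : Fin n → Fin k) : Bool := decide (∃ v ∉ univ.image (x · i), v < y i)
  have hcover : (C' : Set (Fin n → Fin k)).Pairwise fun y y' =>
      ∃ i, y ∈ V i ∧ y' ∈ V i ∧ side i y ≠ side i y' := by
    intro y hy y' hy' hne
    obtain ⟨i, hadj⟩ := exists_hashAdj hmk hhash hxC hxinj hy hy' hne
    exact ⟨i, mem_filter.2 ⟨hy, y', hy', hadj⟩, mem_filter.2 ⟨hy', y, hy, hadj.symm⟩,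
      mt decide_eq_decide.1 (hadj.not_exists_lt_iff hmk)⟩
  have hC'ne : C'.Nonempty := card_pos.1 (by omega)
  calc Real.logb 2 ((C.card : ℝ) - (k : ℝ) + 2) = Real.logb 2 #C' := by rw [hC']
    _ ≤ ∑ i, (#(V i) : ℝ) / #C' := hansel_bound hC'ne V (fun _ => filter_subset _ _) _ hcover
    _ = _ := sum_congr rfl fun i _ => by
      rw [← Set.ncard_coe_finset, hC', sub_sub_eq_add_sub, add_sub_right_comm]
      congr! 3 with y
      simp only [V, coe_filter, mem_C', HashAdj, and_assoc]
end

section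
/- For $k \ge 4$, let $u \in \mathbb{R}^k$ be the uniform probability vector, $u_a = 1/k$. Then for every probability vector $g \in \mathbb{R}^k$, $\phi_k(g, u) \le \phi_k(u, u) = k!/k^{k-1}$, where $\phi_k(g,f) = \sum (\prod_{s=1}^{k-2} g_{a_s})(1 - \sum_{s=1}^{k-2} f_{a_s})$ summed over tuples of $k-2$ distinct indices in $[k]$. Hence $\theta_k(1/k) = k!/k^{k-1}$. -/
/-!
As a function of two coordinates `(x, y)` of `g`, the sum `S(g)` of `∏ g` over injective tuples
has the form `A + B (x + y) + C x y` with `C ≥ 0` (the coefficients of `x` and `y` agree because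
`S` is symmetric). So if `g a < c < g b`, where `c` is the mean of `g`, replacing
`(g a, g b)` by `(c, g a + g b - c)` keeps the sum, does not decrease `S`, and fixes one more
coordinate at `c`; hence `S` is maximal at the constant vector. With `f = u` every term of `φ`
carries the weight `2 / k`, so `φ(g, u) = (2 / k) S(g)`.
-/

open Finset Function

lemma prod_update_eq_ite {ι M : Type*} [DecidableEq ι] [CommMonoid M] (f : ι → M) (a : ι)
    (x : M) (s : Finset ι) :
    ∏ i ∈ s, update f a x i = (if a ∈ s then x else 1) * ∏ i ∈ s.erase a, f i := by
  split_ifs with ha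
  · rw [prod_update_of_mem ha, sdiff_singleton_eq_erase]
  · rw [prod_update_of_notMem ha, erase_eq_of_notMem ha, one_mul]

lemma update_update_comp_swap {ι β : Type*} [DecidableEq ι] (g : ι → β) {a b : ι}
    (hab : a ≠ b) (x y : β) :
    update (update g a x) b y ∘ Equiv.swap a b = update (update g a y) b x := by
  ext i
  rcases eq_or_ne i a with rfl | hia
  · simp [hab]
  rcases eq_or_ne i b with rfl | hib
  · simp [hab]
  simp [hia, hib, Equiv.swap_apply_of_ne_of_ne hia hib]

section

variable {ι : Type*} [Fintype ι]

lemma sum_univ_update {M : Type*} [DecidableEq ι] [AddCommGroup M] (f : ι → M) (a : ι)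
    (x : M) :
    ∑ i, update f a x i = ∑ i, f i - f a + x := by
  rw [sum_update_of_mem (mem_univ a), ← sum_erase_add _ _ (mem_univ a), sdiff_singleton_eq_erase]
  abel

lemma eq_const_of_forall_le_of_sum_eq {g : ι → ℝ} {c : ℝ} (h : ∀ i, c ≤ g i)
    (hsum : ∑ i, g i = Fintype.card ι * c) : g = fun _ => c :=
  funext fun i => ((sum_eq_sum_iff_of_le fun j _ => h j).1 (by simp [hsum]) i (mem_univ i)).symm

lemma eq_const_of_forall_ge_of_sum_eq {g : ι → ℝ} {c : ℝ} (h : ∀ i, g i ≤ c)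
    (hsum : ∑ i, g i = Fintype.card ι * c) : g = fun _ => c :=
  funext fun i => (sum_eq_sum_iff_of_le fun j _ => h j).1 (by simp [hsum]) i (mem_univ i)

lemma exists_lt_and_exists_gt_of_sum_eq {g : ι → ℝ} {c : ℝ}
    (hsum : ∑ i, g i = Fintype.card ι * c) (hne : ∃ i, g i ≠ c) :
    (∃ a, g a < c) ∧ ∃ b, c < g b := by
  obtain ⟨i, hi⟩ := hne
  constructor <;> by_contra! h
  exacts [hi (congrFun (eq_const_of_forall_le_of_sum_eq h hsum) i),
    hi (congrFun (eq_const_of_forall_ge_of_sum_eq h hsum) i)]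

/-- The paper's `m! S_m^k(g)`: `m!` times the elementary symmetric polynomial `e_m(g)`. -/
noncomputable def sumProdEmb (m : ℕ) (g : ι → ℝ) : ℝ :=
  ∑ σ : Fin m ↪ ι, ∏ s, g (σ s)

lemma sumProdEmb_comp_perm (m : ℕ) (π : Equiv.Perm ι) (g : ι → ℝ) :
    sumProdEmb m (g ∘ π) = sumProdEmb m g :=
  Fintype.sum_equiv (Equiv.embeddingCongr (Equiv.refl _) π) _ _ fun σ => by
    simp [Equiv.embeddingCongr, Embedding.congr]

lemma sumProdEmb_const (m : ℕ) (c : ℝ) :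
    sumProdEmb m (fun _ : ι => c) = (Fintype.card ι).descFactorial m * c ^ m := by
  simp [sumProdEmb, Fintype.card_embedding_eq]

variable [DecidableEq ι]

lemma exists_sumProdEmb_update_update_eq (m : ℕ) {g : ι → ℝ} (hg : ∀ i, 0 ≤ g i) {a b : ι}
    (hab : a ≠ b) :
    ∃ A B₁ B₂ C : ℝ, 0 ≤ C ∧ ∀ x y : ℝ,
      sumProdEmb m (update (update g a x) b y) = A + B₁ * x + B₂ * y + C * (x * y) := by
  let Q (σ : Fin m ↪ ι) : ℝ := ∏ i ∈ ((univ.map σ).erase b).erase a, g i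
  refine ⟨∑ σ, if a ∉ univ.map σ ∧ b ∉ univ.map σ then Q σ else 0,
    ∑ σ, if a ∈ univ.map σ ∧ b ∉ univ.map σ then Q σ else 0,
    ∑ σ, if a ∉ univ.map σ ∧ b ∈ univ.map σ then Q σ else 0,
    ∑ σ, if a ∈ univ.map σ ∧ b ∈ univ.map σ then Q σ else 0,
    sum_nonneg fun σ _ => ?_, fun x y => ?_⟩
  · split_ifs
    exacts [prod_nonneg fun i _ => hg i, le_rfl]
  simp only [sum_mul, ← sum_add_distrib, sumProdEmb]
  refine sum_congr rfl fun σ _ => ?_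
  rw [← prod_map univ σ, prod_update_eq_ite, prod_update_eq_ite]
  simp only [mem_erase, ne_eq, hab, not_false_eq_true, true_and]
  by_cases ha : a ∈ univ.map σ <;> by_cases hb : b ∈ univ.map σ <;> simp [ha, hb, Q] <;> ring

lemma sumProdEmb_update_update_le (m : ℕ) {g : ι → ℝ} (hg : ∀ i, 0 ≤ g i) {a b : ι}
    (hab : a ≠ b) {x y x' y' : ℝ} (hs : x + y = x' + y') (hp : x * y ≤ x' * y') :
    sumProdEmb m (update (update g a x) b y) ≤ sumProdEmb m (update (update g a x') b y') := by
  obtain ⟨A, B₁, B₂, C, hC, hS⟩ := exists_sumProdEmb_update_update_eq m hg hab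
  have hB : B₁ = B₂ := by
    have h := sumProdEmb_comp_perm m (Equiv.swap a b) (update (update g a 1) b 0)
    rw [update_update_comp_swap g hab, hS, hS] at h
    linarith
  rw [hS, hS, ← hB]
  linear_combination B₁ * hs + mul_le_mul_of_nonneg_left hp hC

lemma exists_sumProdEmb_le_of_ne_const (m : ℕ) {g : ι → ℝ} {c : ℝ} (hg : ∀ i, 0 ≤ g i)
    (hsum : ∑ i, g i = Fintype.card ι * c) (hne : ∃ i, g i ≠ c) :
    ∃ g' : ι → ℝ, (∀ i, 0 ≤ g' i) ∧ ∑ i, g' i = Fintype.card ι * c ∧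
      #{i | g' i ≠ c} < #{i | g i ≠ c} ∧ sumProdEmb m g ≤ sumProdEmb m g' := by
  obtain ⟨⟨a, ha⟩, ⟨b, hb⟩⟩ := exists_lt_and_exists_gt_of_sum_eq hsum hne
  have hab : a ≠ b := by rintro rfl; linarith
  refine ⟨update (update g a c) b (g a + g b - c), fun i => ?_, ?_, ?_, ?_⟩
  · rcases eq_or_ne i b with rfl | hib
    · simp only [update_self]; linarith [hg a]
    rcases eq_or_ne i a with rfl | hia
    · simp only [update_of_ne hib, update_self]; linarith [hg i]
    simp only [update_of_ne hib, update_of_ne hia, hg i]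
  · rw [sum_univ_update, sum_univ_update, update_of_ne hab.symm, hsum]
    ring
  · calc #{i | update (update g a c) b (g a + g b - c) i ≠ c}
        ≤ #(({i | g i ≠ c} : Finset ι).erase a) := card_le_card fun i => ?_
      _ < #{i | g i ≠ c} := card_erase_lt_of_mem (by simpa using ha.ne)
    rcases eq_or_ne i b with rfl | hib
    · simp [hab.symm, hb.ne']
    rcases eq_or_ne i a with rfl | hia
    · simp [hib]
    simp [hia, hib]
  · conv_lhs =>
      rw [← update_eq_self a g, ← update_eq_self b (update g a (g a)), update_of_ne hab.symm]
    refine sumProdEmb_update_update_le m hg hab (by ring) ?_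
    nlinarith [mul_pos (sub_pos.2 ha) (sub_pos.2 hb)]

theorem sumProdEmb_le_const (m : ℕ) {g : ι → ℝ} {c : ℝ} (hg : ∀ i, 0 ≤ g i)
    (hsum : ∑ i, g i = Fintype.card ι * c) :
    sumProdEmb m g ≤ sumProdEmb m (fun _ : ι => c) := by
  induction hn : #({i | g i ≠ c} : Finset ι) using Nat.strong_induction_on generalizing g with
  | _ n ih =>
  by_cases hne : ∃ i, g i ≠ c
  · obtain ⟨g', hg', hsum', hlt, hle⟩ := exists_sumProdEmb_le_of_ne_const m hg hsum hne
    exact hle.trans (ih _ (hn ▸ hlt) hg' hsum' rfl)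
  · push Not at hne
    rw [show g = fun _ => c from funext hne]

end

lemma two_div_mul_descFactorial_mul_pow {k : ℕ} (hk : 2 ≤ k) :
    2 / (k : ℝ) * (k.descFactorial (k - 2) * (1 / k) ^ (k - 2)) =
      k.factorial / (k : ℝ) ^ (k - 1) := by
  obtain ⟨n, rfl⟩ := Nat.exists_eq_add_of_le' hk
  have hfac : (2 * (n + 2).descFactorial n : ℝ) = (n + 2).factorial := by
    have h := Nat.factorial_mul_descFactorial (show n ≤ n + 2 by omega)
    rw [Nat.add_sub_cancel_left, Nat.factorial_two] at h
    exact_mod_cast h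
  rw [Nat.add_sub_cancel, show n + 2 - 1 = n + 1 by omega, ← hfac, pow_succ, div_pow, one_pow]
  field_simp

lemma sum_prod_mul_one_sub_sum_const {k : ℕ} (hk : 2 ≤ k) (g : Fin k → ℝ) :
    ∑ σ : Fin (k - 2) ↪ Fin k, (∏ s, g (σ s)) * (1 - ∑ _s : Fin (k - 2), 1 / (k : ℝ)) =
      2 / k * sumProdEmb (k - 2) g := by
  have hk0 : (k : ℝ) ≠ 0 := by positivity
  rw [sumProdEmb, mul_sum]
  refine sum_congr rfl fun σ _ => ?_
  rw [sum_const, card_univ, Fintype.card_fin, nsmul_eq_mul, Nat.cast_sub hk]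
  field_simp
  ring

/-- With `u` the uniform probability vector on `[k]`: for every probability vector
`g`, `φ_k(g,u) ≤ φ_k(u,u) = k!/k^{k-1}`; hence `θ_k(1/k) = k!/k^{k-1}`. -/
theorem stmt15 (k : ℕ) (hk : 4 ≤ k)
    (φ : (Fin k → ℝ) → (Fin k → ℝ) → ℝ)
    (hφ : φ = fun g f => ∑ σ : Fin (k - 2) ↪ Fin k,
      (∏ s, g (σ s)) * (1 - ∑ s, f (σ s)))
    (u : Fin k → ℝ) (hu : u = fun _ => 1 / (k : ℝ)) :
    (∀ g : Fin k → ℝ, (∀ a, 0 ≤ g a) → (∑ a, g a = 1) →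
        φ g u ≤ (Nat.factorial k : ℝ) / (k : ℝ) ^ (k - 1)) ∧
    φ u u = (Nat.factorial k : ℝ) / (k : ℝ) ^ (k - 1) ∧
    sSup ((fun p : (Fin k → ℝ) × (Fin k → ℝ) => φ p.1 p.2) ''
        {p : (Fin k → ℝ) × (Fin k → ℝ) |
          (∀ a, 0 ≤ p.1 a) ∧ (∑ a, p.1 a = 1) ∧
          (∀ a, 0 ≤ p.2 a) ∧ (∑ a, p.2 a = 1) ∧
          (∀ a, 1 / (k : ℝ) ≤ p.2 a)})
      = (Nat.factorial k : ℝ) / (k : ℝ) ^ (k - 1) := by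
  have hk2 : 2 ≤ k := by omega
  have hk0 : (k : ℝ) ≠ 0 := by positivity
  have hsum_iff (g : Fin k → ℝ) :
      ∑ a, g a = 1 ↔ ∑ a, g a = Fintype.card (Fin k) * (1 / k) := by
    rw [Fintype.card_fin, mul_one_div_cancel hk0]
  have hφu (g : Fin k → ℝ) : φ g u = 2 / k * sumProdEmb (k - 2) g := by
    subst hφ hu
    exact sum_prod_mul_one_sub_sum_const hk2 g
  have huu : φ u u = k.factorial / (k : ℝ) ^ (k - 1) := by
    rw [hφu, hu, sumProdEmb_const, Fintype.card_fin, two_div_mul_descFactorial_mul_pow hk2]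
  have hmax (g : Fin k → ℝ) (hg : ∀ a, 0 ≤ g a) (hsum : ∑ a, g a = 1) :
      φ g u ≤ φ u u := by
    rw [hφu, hφu, hu]
    gcongr
    exact sumProdEmb_le_const _ hg ((hsum_iff g).1 hsum)
  have hu_mem : (∀ a, 0 ≤ u a) ∧ ∑ a, u a = 1 := by
    subst hu
    exact ⟨fun _ => by positivity, (hsum_iff _).2 (by simp)⟩
  refine ⟨fun g hg hsum => huu ▸ hmax g hg hsum, huu, IsGreatest.csSup_eq ⟨?_, ?_⟩⟩
  · exact ⟨(u, u), ⟨hu_mem.1, hu_mem.2, hu_mem.1, hu_mem.2, fun a => by rw [hu]⟩, huu⟩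
  · rintro _ ⟨⟨g, f⟩, ⟨hg, hgs, -, hfs, hf⟩, rfl⟩
    obtain rfl : f = u := hu ▸ eq_const_of_forall_le_of_sum_eq hf ((hsum_iff f).1 hfs)
    exact huu ▸ hmax g hg hgs
end
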